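/- arXiv:2502.12024 — 2 statements merged into one kernel-verified Lean document; each statement's English description precedes it below -/
import Mathlib

section
/- Let f : ℤ≥0 → ℝ be discretely convex (Δ²f(x) = f(x+2) − 2f(x+1) + f(x) ≥ 0 for all x ≥ 0) and nondecreasing. Define E_f(x,a) = ((1−δ)a/(1+a)) f(x+1) + ((1−δ+δa)/(1+a)) f(x) + (δ/(1+a)) f(x−1) for x ≥ 1, and E_f(0,a) = ((1−δ)a/(1+a)) f(1) + (1 − (1−δ)a/(1+a)) f(0). Then for every fixed a ∈ (0,1] and δ ∈ (0,1), the function x ↦ E_f(x,a) is discretely convex on ℤ≥0. -/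
/-- If `f : ℕ → ℝ` is discretely convex and nondecreasing, then the expected value
`E_f(·, a)` under the birth–death investment kernel is discretely convex. -/
theorem expected_value_discretely_convex
    (δ a : ℝ) (hδ0 : 0 < δ) (hδ1 : δ < 1) (ha0 : 0 < a) (ha1 : a ≤ 1)
    (f : ℕ → ℝ)
    (hconv : ∀ x : ℕ, f (x + 2) - 2 * f (x + 1) + f x ≥ 0)
    (hmono : ∀ x : ℕ, f x ≤ f (x + 1))
    (E : ℕ → ℝ)
    (hE0 : E 0 = ((1 - δ) * a / (1 + a)) * f 1
      + (1 - (1 - δ) * a / (1 + a)) * f 0)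
    (hEpos : ∀ x : ℕ, E (x + 1) = ((1 - δ) * a / (1 + a)) * f (x + 2)
      + ((1 - δ + δ * a) / (1 + a)) * f (x + 1) + (δ / (1 + a)) * f x) :
    ∀ x : ℕ, E (x + 2) - 2 * E (x + 1) + E x ≥ 0 := by
  have hA : (0:ℝ) < 1 + a := by linarith
  have hc1 : 0 ≤ (1 - δ) * a / (1 + a) :=
    div_nonneg (mul_nonneg (by linarith) ha0.le) hA.le
  have hc2 : 0 ≤ (1 - δ + δ * a) / (1 + a) :=
    div_nonneg (by nlinarith) hA.le
  have hc3 : 0 ≤ δ / (1 + a) := div_nonneg hδ0.le hA.le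
  intro x
  cases x with
  | zero =>
    have key : E 2 - 2 * E 1 + E 0 =
        ((1 - δ) * a / (1 + a)) * (f 3 - 2 * f 2 + f 1)
        + ((1 - δ + δ * a) / (1 + a)) * (f 2 - 2 * f 1 + f 0)
        + (δ / (1 + a)) * (f 1 - f 0) := by
      rw [hE0, hEpos 0, hEpos 1]
      field_simp
      ring
    rw [key]
    have h1 := hconv 1
    have h0 := hconv 0
    have hm := hmono 0
    norm_num at h1 h0 ⊢
    have := mul_nonneg hc1 (by linarith : (0:ℝ) ≤ f 3 - 2 * f 2 + f 1)
    have := mul_nonneg hc2 (by linarith : (0:ℝ) ≤ f 2 - 2 * f 1 + f 0)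
    have := mul_nonneg hc3 (by linarith : (0:ℝ) ≤ f 1 - f 0)
    linarith
  | succ n =>
    have key : E (n + 3) - 2 * E (n + 2) + E (n + 1) =
        ((1 - δ) * a / (1 + a)) * (f (n + 4) - 2 * f (n + 3) + f (n + 2))
        + ((1 - δ + δ * a) / (1 + a)) * (f (n + 3) - 2 * f (n + 2) + f (n + 1))
        + (δ / (1 + a)) * (f (n + 2) - 2 * f (n + 1) + f n) := by
      rw [hEpos n, hEpos (n + 1), hEpos (n + 2)]
      norm_num
      ring
    have h2 := hconv (n + 2)
    have h1 := hconv (n + 1)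
    have h0 := hconv n
    norm_num at h2 h1 ⊢
    rw [show n + 1 + 2 = n + 3 from rfl, key]
    have := mul_nonneg hc1 (by linarith : (0:ℝ) ≤ f (n + 4) - 2 * f (n + 3) + f (n + 2))
    have := mul_nonneg hc2 (by linarith : (0:ℝ) ≤ f (n + 3) - 2 * f (n + 2) + f (n + 1))
    have := mul_nonneg hc3 (by linarith : (0:ℝ) ≤ f (n + 2) - 2 * f (n + 1) + f n)
    linarith
end

section
/- Let (Z, ≥) be a partially ordered set, and σ : [a,b] × Z → ℝ be continuous in its first argument, nondecreasing in z (i.e., σ(m, z₂) ≥ σ(m, z₁) whenever z₂ ≥ z₁), with σ(a, z) ≥ 0 and σ(b, z) ≤ 0 for all z. Then for each z the set of roots {m : σ(m,z) = 0} is nonempty and compact, and the greatest root m̄(z) and least root m̲(z) are nondecreasing functions of z. -/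
/-- Milgrom–Roberts-style comparative statics: if `σ(·,z)` is continuous on `[a,b]`,
nondecreasing in `z`, with `σ(a,z) ≥ 0 ≥ σ(b,z)`, then the root set is nonempty and
compact for each `z`, and the greatest and least roots are nondecreasing in `z`. -/
theorem comparative_statics_roots
    {Z : Type*} [PartialOrder Z]
    (a b : ℝ) (hab : a ≤ b)
    (σ : ℝ → Z → ℝ)
    (hcont : ∀ z : Z, ContinuousOn (fun m => σ m z) (Set.Icc a b))
    (hmono : ∀ m : ℝ, ∀ z₁ z₂ : Z, z₁ ≤ z₂ → σ m z₁ ≤ σ m z₂)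
    (hσa : ∀ z : Z, 0 ≤ σ a z)
    (hσb : ∀ z : Z, σ b z ≤ 0) :
    (∀ z : Z, ({m ∈ Set.Icc a b | σ m z = 0}).Nonempty ∧
      IsCompact {m ∈ Set.Icc a b | σ m z = 0}) ∧
    ∃ mbar mlow : Z → ℝ,
      (∀ z : Z, IsGreatest {m ∈ Set.Icc a b | σ m z = 0} (mbar z)) ∧
      (∀ z : Z, IsLeast {m ∈ Set.Icc a b | σ m z = 0} (mlow z)) ∧
      Monotone mbar ∧ Monotone mlow := by
  set S : Z → Set ℝ := fun z => {m ∈ Set.Icc a b | σ m z = 0} with hS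
  have hne : ∀ z, (S z).Nonempty := by
    intro z
    have h0 : (0 : ℝ) ∈ Set.Icc (σ b z) (σ a z) := ⟨hσb z, hσa z⟩
    obtain ⟨m, hm, hm0⟩ := intermediate_value_Icc' hab (hcont z) h0
    exact ⟨m, hm, hm0⟩
  have hcomp : ∀ z, IsCompact (S z) := by
    intro z
    have hclosed : IsClosed (S z) := by
      have heq : S z = Set.Icc a b ∩ ((fun m => σ m z) ⁻¹' {0}) := by
        ext m; simp [hS]
      rw [heq]
      exact (hcont z).preimage_isClosed_of_isClosed isClosed_Icc isClosed_singleton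
    exact isCompact_Icc.of_isClosed_subset hclosed fun m hm => hm.1
  have hgreat : ∀ z, ∃ m, IsGreatest (S z) m := fun z =>
    (hcomp z).exists_isGreatest (hne z)
  have hleast : ∀ z, ∃ m, IsLeast (S z) m := fun z =>
    (hcomp z).exists_isLeast (hne z)
  choose mbar hmbar using hgreat
  choose mlow hmlow using hleast
  refine ⟨fun z => ⟨hne z, hcomp z⟩, mbar, mlow, hmbar, hmlow, ?_, ?_⟩
  · -- mbar monotone
    intro z₁ z₂ hz
    obtain ⟨⟨⟨ha1, hb1⟩, h01⟩, _⟩ := hmbar z₁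
    -- σ (mbar z₁) z₂ ≥ 0, σ b z₂ ≤ 0 → root in [mbar z₁, b]
    have hge : 0 ≤ σ (mbar z₁) z₂ := h01 ▸ hmono _ _ _ hz
    have hsub : Set.Icc (mbar z₁) b ⊆ Set.Icc a b := Set.Icc_subset_Icc ha1 le_rfl
    have h0 : (0 : ℝ) ∈ Set.Icc (σ b z₂) (σ (mbar z₁) z₂) := ⟨hσb z₂, hge⟩
    obtain ⟨m, hm, hm0⟩ := intermediate_value_Icc' hb1 ((hcont z₂).mono hsub) h0
    exact le_trans hm.1 ((hmbar z₂).2 ⟨hsub hm, hm0⟩)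
  · -- mlow monotone
    intro z₁ z₂ hz
    obtain ⟨⟨⟨ha2, hb2⟩, h02⟩, _⟩ := hmlow z₂
    have hle : σ (mlow z₂) z₁ ≤ 0 := h02 ▸ hmono _ _ _ hz
    have hsub : Set.Icc a (mlow z₂) ⊆ Set.Icc a b := Set.Icc_subset_Icc le_rfl hb2
    have h0 : (0 : ℝ) ∈ Set.Icc (σ (mlow z₂) z₁) (σ a z₁) := ⟨hle, hσa z₁⟩
    obtain ⟨m, hm, hm0⟩ := intermediate_value_Icc' ha2 ((hcont z₁).mono hsub) h0
    exact le_trans ((hmlow z₁).2 ⟨hsub hm, hm0⟩) hm.2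
end
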